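/- Let m > 1 be an integer with gcd(m, 30) = 1. Then there exist odd positive integers S and R such that (RS + 1)² + S² ≡ 1 (mod m) and gcd(2S(RS + 1), m) = 1. -/

import Mathlib

/-! Take `R = m + 2`, so that `R ≡ 2 (mod m)`, and choose `S` odd and positive with `5S ≡ -4 (mod m)`,
possible since `m` is odd and prime to `5`. Then `(RS + 1)² + S² - 1 ≡ S(5S + 4) ≡ 0`, and
`5S ≡ -4`, `5(RS + 1) ≡ -3` show that `S` and `RS + 1` are prime to `m`, as `m` is prime to `30`. -/

theorem Int.ModEq.isCoprime {a b m : ℤ} (h : a ≡ b [ZMOD m]) (ha : IsCoprime a m) :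
    IsCoprime b m := by
  obtain ⟨t, rfl⟩ := Int.modEq_iff_add_fac.mp h
  exact ha.add_mul_left_left t

theorem Int.exists_mul_modEq_of_isCoprime {a m : ℤ} (h : IsCoprime a m) (b : ℤ) :
    ∃ x, a * x ≡ b [ZMOD m] := by
  obtain ⟨u, v, huv⟩ := h
  exact ⟨u * b, Int.modEq_iff_add_fac.mpr ⟨v * b, by linear_combination (-b) * huv⟩⟩

theorem Int.exists_odd_pos_modEq {m : ℤ} (hm : Odd m) (x : ℤ) :
    ∃ S, Odd S ∧ 0 < S ∧ S ≡ x [ZMOD m] := by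
  -- `x + m (x + 1)` is odd and `≡ x`; reducing it modulo the even number `2m` keeps both properties
  set z := x + m * (x + 1)
  have hz : Odd z := by
    rcases Int.even_or_odd x with hx | hx
    · exact hx.add_odd (hm.mul hx.add_one)
    · exact hx.add_even (hx.add_one.mul_left m)
  have h2m : 2 * m ≠ 0 := mul_ne_zero two_ne_zero (by rintro rfl; simp at hm)
  have hodd : Odd (z % (2 * m)) := by
    rw [Int.emod_def]
    exact hz.sub_even ((even_two_mul m).mul_right _)
  refine ⟨z % (2 * m), hodd, ?_, ?_⟩
  · exact lt_of_le_of_ne (Int.emod_nonneg z h2m) (fun h => by simp [← h] at hodd)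
  · calc z % (2 * m) ≡ z [ZMOD m] := Int.emod_emod_of_dvd z (dvd_mul_left m 2)
      _ ≡ x [ZMOD m] := Int.add_mul_emod_self_left x m (x + 1)

section

variable {m R S : ℤ} (hR : R ≡ 2 [ZMOD m]) (hS : 5 * S ≡ -4 [ZMOD m])
include hR hS

theorem sq_mul_add_one_add_sq_modEq_one : (R * S + 1) ^ 2 + S ^ 2 ≡ 1 [ZMOD m] :=
  calc (R * S + 1) ^ 2 + S ^ 2 ≡ (2 * S + 1) ^ 2 + S ^ 2 [ZMOD m] :=
        (((hR.mul_right S).add_right 1).pow 2).add_right _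
    _ = S * (5 * S) + 4 * S + 1 := by ring
    _ ≡ S * (-4) + 4 * S + 1 [ZMOD m] := ((hS.mul_left S).add_right _).add_right _
    _ = 1 := by ring

theorem isCoprime_mul_add_one (h3 : IsCoprime 3 m) : IsCoprime (R * S + 1) m := by
  have h : -3 ≡ 5 * (R * S + 1) [ZMOD m] :=
    calc -3 = 2 * (-4) + 5 := by norm_num
      _ ≡ 2 * (5 * S) + 5 [ZMOD m] := (hS.symm.mul_left 2).add_right 5
      _ = 5 * (2 * S + 1) := by ring
      _ ≡ 5 * (R * S + 1) [ZMOD m] := (((hR.symm.mul_right S).add_right 1).mul_left 5)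
  exact (h.isCoprime h3.neg_left).of_mul_left_right

end

/-- for `m > 1` coprime to 30 there are odd positive integers `S`, `R` with
`(RS+1)² + S² ≡ 1 (mod m)` and `gcd(2S(RS+1), m) = 1`. -/
theorem stmt_19 (m : ℤ) (hm : 1 < m) (hm30 : Int.gcd m 30 = 1) :
    ∃ S R : ℤ, Odd S ∧ Odd R ∧ 0 < S ∧ 0 < R ∧
      (R * S + 1) ^ 2 + S ^ 2 ≡ 1 [ZMOD m] ∧
      Int.gcd (2 * S * (R * S + 1)) m = 1 := by
  have hcop : IsCoprime m 30 := Int.isCoprime_iff_gcd_eq_one.mpr hm30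
  have h2 : IsCoprime 2 m := (hcop.of_isCoprime_of_dvd_right (by norm_num)).symm
  have h3 : IsCoprime 3 m := (hcop.of_isCoprime_of_dvd_right (by norm_num)).symm
  have h5 : IsCoprime 5 m := (hcop.of_isCoprime_of_dvd_right (by norm_num)).symm
  have hm_odd : Odd m := Int.isCoprime_two_left.mp h2
  obtain ⟨x, hx⟩ := Int.exists_mul_modEq_of_isCoprime h5 (-4)
  obtain ⟨S, hS_odd, hS_pos, hSx⟩ := Int.exists_odd_pos_modEq hm_odd x
  have hS : 5 * S ≡ -4 [ZMOD m] := (hSx.mul_left 5).trans hx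
  have hR : m + 2 ≡ 2 [ZMOD m] := Int.add_modEq_left
  have hS_cop : IsCoprime S m :=
    (hS.symm.isCoprime (h2.mul_left h2).neg_left).of_mul_left_right
  refine ⟨S, m + 2, hS_odd, hm_odd.add_even even_two, hS_pos, by omega,
    sq_mul_add_one_add_sq_modEq_one hR hS, ?_⟩
  exact Int.isCoprime_iff_gcd_eq_one.mp
    ((h2.mul_left hS_cop).mul_left (isCoprime_mul_add_one hR hS h3))
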